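/- Let c = R(τ₁)⋯R(τ_n) with ℓ(c) = n in a finite real reflection group of rank n, all τ_j unit roots, and let μ = 2(I−c)⁻¹. Fix i and set ε_i = R(τ₁)⋯R(τ_{i−1})(τ_i). Then μ(ε_i)·τ_j = 0 for all j ≠ i and μ(ε_i)·τ_i = 1. -/

import Mathlib

open scoped RealInnerProductSpace

noncomputable section

/-- `g` is an orthogonal reflection in the hyperplane `τ^⊥` for some unit vector `τ`. -/
def IsReflection {n : ℕ}
    (g : EuclideanSpace ℝ (Fin n) ≃ₗᵢ[ℝ] EuclideanSpace ℝ (Fin n)) : Prop :=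
  ∃ τ : EuclideanSpace ℝ (Fin n), ‖τ‖ = 1 ∧ ∀ x, g x = x - (2 * ⟪x, τ⟫) • τ

/-- Absolute reflection length: the minimal number of reflections of `W`
whose product is `w`. -/
def rlen {n : ℕ}
    (W : Subgroup (EuclideanSpace ℝ (Fin n) ≃ₗᵢ[ℝ] EuclideanSpace ℝ (Fin n)))
    (w : EuclideanSpace ℝ (Fin n) ≃ₗᵢ[ℝ] EuclideanSpace ℝ (Fin n)) : ℕ :=
  sInf {k | ∃ L : List (EuclideanSpace ℝ (Fin n) ≃ₗᵢ[ℝ] EuclideanSpace ℝ (Fin n)),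
    (∀ r ∈ L, r ∈ W ∧ IsReflection r) ∧ L.length = k ∧ L.prod = w}

/-- The moved space `M(w) = im (I - w)`, the orthogonal complement of the
fixed subspace of `w`. -/
def mov {n : ℕ} (w : EuclideanSpace ℝ (Fin n) ≃ₗᵢ[ℝ] EuclideanSpace ℝ (Fin n)) :
    Submodule ℝ (EuclideanSpace ℝ (Fin n)) :=
  LinearMap.range ((LinearMap.id : _ →ₗ[ℝ] _) -
    (w.toLinearEquiv : EuclideanSpace ℝ (Fin n) →ₗ[ℝ] EuclideanSpace ℝ (Fin n)))

/-- The absolute order: `u ⪯ w` iff `ℓ(u) + ℓ(u⁻¹ w) = ℓ(w)`. -/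
def absLe {n : ℕ}
    (W : Subgroup (EuclideanSpace ℝ (Fin n) ≃ₗᵢ[ℝ] EuclideanSpace ℝ (Fin n)))
    (u w : EuclideanSpace ℝ (Fin n) ≃ₗᵢ[ℝ] EuclideanSpace ℝ (Fin n)) : Prop :=
  rlen W u + rlen W (u⁻¹ * w) = rlen W w

/-!
Writing `P_j = R(τ₁)⋯R(τ_j)`, the difference `x - c x` telescopes as
`∑ j, (P_{j-1} x - P_j x) = ∑ j, P_{j-1} (x - R(τ_j) x) = ∑ j, 2⟪x, τ_j⟫ ε_j`.
Hence the image of `I - c` lies in the span of the `n` vectors `ε_j`; since `I - c` is onto,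
they form a basis. Applying the identity to `x = μ ε_i`, for which `x - c x = 2 ε_i`, and
comparing coefficients in this basis gives `⟪μ ε_i, τ_j⟫ = δ_ij`.
-/

section Telescoping

variable {R E : Type*} [Semiring R] [SeminormedAddCommGroup E] [Module R E]

theorem LinearIsometryEquiv.sub_prod_ofFn_apply {m : ℕ} (g : Fin m → E ≃ₗᵢ[R] E) (x : E) :
    x - (List.ofFn g).prod x = ∑ j : Fin m, ((List.ofFn g).take j).prod (x - g j x) := by
  induction m with
  | zero => simp
  | succ m ih =>
    rw [List.ofFn_succ, List.prod_cons, Fin.sum_univ_succ]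
    simp only [Fin.val_zero, List.take_zero, List.prod_nil, Fin.val_succ, List.take_succ_cons,
      List.prod_cons, LinearIsometryEquiv.coe_mul, Function.comp_apply, LinearIsometryEquiv.coe_one,
      id_eq]
    rw [← map_sum, ← ih (fun j => g j.succ), map_sub]
    abel

end Telescoping

section ReflectionProduct

variable {E : Type*} [NormedAddCommGroup E] [InnerProductSpace ℝ E] {m : ℕ}
  {τ : Fin m → E} {r : Fin m → E ≃ₗᵢ[ℝ] E}

theorem sub_prod_reflections_apply (hr : ∀ j x, r j x = x - (2 * ⟪x, τ j⟫) • τ j) (x : E) :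
    x - (List.ofFn r).prod x = ∑ j, (2 * ⟪x, τ j⟫) • ((List.ofFn r).take j).prod (τ j) := by
  rw [LinearIsometryEquiv.sub_prod_ofFn_apply]
  congr! 1 with j
  rw [hr, sub_sub_cancel, LinearIsometryEquiv.map_smul]

theorem linearIndependent_prod_take_reflections_apply (hdim : Module.finrank ℝ E = m)
    (hr : ∀ j x, r j x = x - (2 * ⟪x, τ j⟫) • τ j)
    (hsurj : ∀ y, ∃ x, x - (List.ofFn r).prod x = y) :
    LinearIndependent ℝ (fun j : Fin m => ((List.ofFn r).take j).prod (τ j)) := by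
  refine linearIndependent_of_top_le_span_of_card_eq_finrank (fun y _ => ?_) (by simp [hdim])
  obtain ⟨x, rfl⟩ := hsurj y
  rw [sub_prod_reflections_apply hr]
  exact Submodule.sum_mem _ fun j _ => Submodule.smul_mem _ _ (Submodule.subset_span ⟨j, rfl⟩)

theorem inner_prod_take_reflections_eq_ite (hdim : Module.finrank ℝ E = m)
    (hr : ∀ j x, r j x = x - (2 * ⟪x, τ j⟫) • τ j) (μ : E → E)
    (hμ : ∀ x, μ x - (List.ofFn r).prod (μ x) = (2 : ℝ) • x) (i j : Fin m) :
    ⟪μ (((List.ofFn r).take i).prod (τ i)), τ j⟫ = if j = i then 1 else 0 := by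
  set ε : Fin m → E := fun j => ((List.ofFn r).take j).prod (τ j)
  have hsurj : ∀ y, ∃ x, x - (List.ofFn r).prod x = y := fun y =>
    ⟨(2 : ℝ)⁻¹ • μ y, by
      rw [LinearIsometryEquiv.map_smul, ← smul_sub, hμ, inv_smul_smul₀ two_ne_zero]⟩
  have hcoord : ∑ j, ⟪μ (ε i), τ j⟫ • ε j = ∑ j, (if j = i then (1 : ℝ) else 0) • ε j := by
    have h := (hμ (ε i)).symm.trans (sub_prod_reflections_apply hr (μ (ε i)))
    simp only [mul_smul, ← Finset.smul_sum] at h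
    simp only [ite_smul, one_smul, zero_smul, Finset.sum_ite_eq', Finset.mem_univ, if_true]
    exact (smul_right_injective E two_ne_zero h).symm
  exact Fintype.linearIndependent_iffₛ.1
    (linearIndependent_prod_take_reflections_apply hdim hr hsurj) _ _ hcoord j

end ReflectionProduct

theorem stmt_15_general {n : ℕ}
    (τ : Fin n → EuclideanSpace ℝ (Fin n))
    (r : Fin n → (EuclideanSpace ℝ (Fin n) ≃ₗᵢ[ℝ] EuclideanSpace ℝ (Fin n)))
    (hr : ∀ i x, r i x = x - (2 * ⟪x, τ i⟫) • τ i)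
    (c : EuclideanSpace ℝ (Fin n) ≃ₗᵢ[ℝ] EuclideanSpace ℝ (Fin n))
    (hfact : c = (List.ofFn r).prod)
    (μ : EuclideanSpace ℝ (Fin n) →ₗ[ℝ] EuclideanSpace ℝ (Fin n))
    (hμ₁ : ∀ x, μ x - c (μ x) = (2 : ℝ) • x)
    (i : Fin n) (ε : EuclideanSpace ℝ (Fin n))
    (hε : ε = ((List.ofFn r).take i.val).prod (τ i)) :
    (∀ j, j ≠ i → ⟪μ ε, τ j⟫ = 0) ∧ ⟪μ ε, τ i⟫ = 1 := by
  subst hfact hε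
  have hcoord := inner_prod_take_reflections_eq_ite finrank_euclideanSpace_fin hr μ hμ₁ i
  exact ⟨fun j hj => by simpa [hj] using hcoord j, by simpa using hcoord i⟩

/-- Let `c = R(τ₁)⋯R(τ_n)` with `ℓ(c) = n` in a finite real reflection group of
rank `n`, all `τ_j` unit roots, and let `μ = 2(I - c)⁻¹`.  Fix `i` and set
`ε_i = R(τ₁)⋯R(τ_{i-1})(τ_i)`.  Then `μ(ε_i)·τ_j = 0` for `j ≠ i` and
`μ(ε_i)·τ_i = 1`. -/
theorem stmt_15 {n : ℕ}
    (W : Subgroup (EuclideanSpace ℝ (Fin n) ≃ₗᵢ[ℝ] EuclideanSpace ℝ (Fin n)))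
    (hfin : Finite W)
    (hgen : ∀ w ∈ W, ∃ L : List (EuclideanSpace ℝ (Fin n) ≃ₗᵢ[ℝ] EuclideanSpace ℝ (Fin n)),
      (∀ r ∈ L, r ∈ W ∧ IsReflection r) ∧ L.prod = w)
    (τ : Fin n → EuclideanSpace ℝ (Fin n)) (hτ : ∀ i, ‖τ i‖ = 1)
    (r : Fin n → (EuclideanSpace ℝ (Fin n) ≃ₗᵢ[ℝ] EuclideanSpace ℝ (Fin n)))
    (hrW : ∀ i, r i ∈ W)
    (hr : ∀ i x, r i x = x - (2 * ⟪x, τ i⟫) • τ i)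
    (c : EuclideanSpace ℝ (Fin n) ≃ₗᵢ[ℝ] EuclideanSpace ℝ (Fin n))
    (hfact : c = (List.ofFn r).prod)
    (hlen : rlen W c = n)
    (μ : EuclideanSpace ℝ (Fin n) →ₗ[ℝ] EuclideanSpace ℝ (Fin n))
    (hμ₁ : ∀ x, μ x - c (μ x) = (2 : ℝ) • x)
    (hμ₂ : ∀ x, μ (x - c x) = (2 : ℝ) • x)
    (i : Fin n) (ε : EuclideanSpace ℝ (Fin n))
    (hε : ε = ((List.ofFn r).take i.val).prod (τ i)) :
    (∀ j, j ≠ i → ⟪μ ε, τ j⟫ = 0) ∧ ⟪μ ε, τ i⟫ = 1 :=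
  stmt_15_general τ r hr c hfact μ hμ₁ i ε hε
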